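/- arXiv:1806.09062 — 5 statements merged into one kernel-verified Lean document; each statement's English description precedes it below -/
import Mathlib

section
/- Let K be a convex subset of ℝⁿ and φ : K → [0,∞) a continuous convex nonnegative function. Then there exists an increasing sequence (φ_k) of Lipschitz convex nonnegative functions on K converging pointwise to φ on K. -/
theorem convex_nonneg_approx_lipschitz_increasing
    {n : ℕ} (K : Set (Fin n → ℝ)) (hK : Convex ℝ K)
    (φ : (Fin n → ℝ) → ℝ)
    (hcont : ContinuousOn φ K) (hconv : ConvexOn ℝ K φ)
    (hnonneg : ∀ x ∈ K, 0 ≤ φ x) :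
    ∃ φk : ℕ → (Fin n → ℝ) → ℝ,
      (∀ m, ConvexOn ℝ K (φk m)) ∧
      (∀ m, ∀ x ∈ K, 0 ≤ φk m x) ∧
      (∀ m, ∃ c : ℝ, 0 ≤ c ∧ ∀ x ∈ K, ∀ y ∈ K, |φk m x - φk m y| ≤ c * ‖x - y‖) ∧
      (∀ m, ∀ x ∈ K, φk m x ≤ φk (m + 1) x) ∧
      (∀ x ∈ K, Filter.Tendsto (fun m => φk m x) Filter.atTop (nhds (φ x))) := by
  set F : ℕ → (Fin n → ℝ) → (Fin n → ℝ) → ℝ :=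
    fun m x y => φ y + (m : ℝ) * ‖x - y‖ with hF
  set φk : ℕ → (Fin n → ℝ) → ℝ := fun m x => ⨅ y : K, F m x y with hφk
  have hFnonneg : ∀ m x (y : K), 0 ≤ F m x y := by
    intro m x y
    have := hnonneg y y.2
    positivity
  have hbdd : ∀ m x, BddBelow (Set.range fun y : K => F m x y) := by
    intro m x
    exact ⟨0, by rintro _ ⟨y, rfl⟩; exact hFnonneg m x y⟩
  have hle : ∀ m x, ∀ y ∈ K, φk m x ≤ F m x y := by
    intro m x y hy
    exact ciInf_le (hbdd m x) ⟨y, hy⟩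
  have hge : ∀ m x c, K.Nonempty → (∀ y ∈ K, c ≤ F m x y) → c ≤ φk m x := by
    intro m x c hne h
    have : Nonempty K := hne.to_subtype
    exact le_ciInf fun y => h y y.2
  have hnn : ∀ m, ∀ x ∈ K, 0 ≤ φk m x := by
    intro m x hx
    exact hge m x 0 ⟨x, hx⟩ fun y hy => hFnonneg m x ⟨y, hy⟩
  have hlip : ∀ m, ∀ x ∈ K, ∀ z ∈ K, φk m x ≤ φk m z + (m : ℝ) * ‖x - z‖ := by
    intro m x hx z hz
    have : ∀ y ∈ K, φk m x - (m : ℝ) * ‖x - z‖ ≤ F m z y := by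
      intro y hy
      have h1 : φk m x ≤ F m x y := hle m x y hy
      have h2 : ‖x - y‖ ≤ ‖x - z‖ + ‖z - y‖ := by
        simpa using norm_sub_le_norm_sub_add_norm_sub x z y
      have h3 : (m : ℝ) * ‖x - y‖ ≤ (m : ℝ) * (‖x - z‖ + ‖z - y‖) :=
        mul_le_mul_of_nonneg_left h2 (Nat.cast_nonneg m)
      simp only [hF] at h1 ⊢
      nlinarith
    have := hge m z _ ⟨x, hx⟩ this
    linarith
  refine ⟨φk, ?_, hnn, ?_, ?_, ?_⟩
  · -- convexity
    intro m
    refine ⟨hK, ?_⟩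
    intro x₁ hx₁ x₂ hx₂ a b ha hb hab
    rw [smul_eq_mul, smul_eq_mul]
    set x := a • x₁ + b • x₂ with hx
    have hxK : x ∈ K := hK hx₁ hx₂ ha hb hab
    have key : ∀ y₁ ∈ K, ∀ y₂ ∈ K,
        φk m x ≤ a * F m x₁ y₁ + b * F m x₂ y₂ := by
      intro y₁ hy₁ y₂ hy₂
      have hyK : a • y₁ + b • y₂ ∈ K := hK hy₁ hy₂ ha hb hab
      have h1 : φk m x ≤ F m x (a • y₁ + b • y₂) := hle m x _ hyK
      have hφy : φ (a • y₁ + b • y₂) ≤ a * φ y₁ + b * φ y₂ := by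
        simpa [smul_eq_mul] using hconv.2 hy₁ hy₂ ha hb hab
      have hnorm : ‖x - (a • y₁ + b • y₂)‖ ≤ a * ‖x₁ - y₁‖ + b * ‖x₂ - y₂‖ := by
        have : x - (a • y₁ + b • y₂) = a • (x₁ - y₁) + b • (x₂ - y₂) := by
          simp only [hx, smul_sub]; abel
        rw [this]
        calc ‖a • (x₁ - y₁) + b • (x₂ - y₂)‖
            ≤ ‖a • (x₁ - y₁)‖ + ‖b • (x₂ - y₂)‖ := norm_add_le _ _
          _ = a * ‖x₁ - y₁‖ + b * ‖x₂ - y₂‖ := by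
              rw [norm_smul, norm_smul, Real.norm_eq_abs, Real.norm_eq_abs,
                abs_of_nonneg ha, abs_of_nonneg hb]
      have hmn : (m : ℝ) * ‖x - (a • y₁ + b • y₂)‖
          ≤ (m : ℝ) * (a * ‖x₁ - y₁‖ + b * ‖x₂ - y₂‖) :=
        mul_le_mul_of_nonneg_left hnorm (Nat.cast_nonneg m)
      simp only [hF] at h1 ⊢
      nlinarith
    have h2 : a * φk m x₂ = a * φk m x₂ := rfl
    -- reduce using mul_iInf
    have hne : Nonempty K := Set.Nonempty.to_subtype ⟨x₁, hx₁⟩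
    have step1 : ∀ y₁ ∈ K, φk m x - a * F m x₁ y₁ ≤ b * φk m x₂ := by
      intro y₁ hy₁
      rw [hφk]
      rw [Real.mul_iInf_of_nonneg hb]
      refine le_ciInf fun y₂ => ?_
      have := key y₁ hy₁ y₂ y₂.2
      linarith
    have step2 : φk m x - b * φk m x₂ ≤ a * φk m x₁ := by
      conv_rhs => rw [hφk, Real.mul_iInf_of_nonneg ha]
      refine le_ciInf fun y₁ => ?_
      have := step1 y₁ y₁.2
      linarith
    linarith
  · -- Lipschitz
    intro m
    refine ⟨m, Nat.cast_nonneg m, ?_⟩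
    intro x hx y hy
    rw [abs_sub_le_iff]
    constructor
    · have := hlip m x hx y hy; linarith
    · have := hlip m y hy x hx
      rw [show ‖y - x‖ = ‖x - y‖ from norm_sub_rev y x] at this
      linarith
  · -- increasing
    intro m x hx
    refine hge (m+1) x _ ⟨x, hx⟩ fun y hy => ?_
    have h1 : φk m x ≤ F m x y := hle m x y hy
    have h2 : (m : ℝ) * ‖x - y‖ ≤ ((m : ℝ) + 1) * ‖x - y‖ := by
      nlinarith [norm_nonneg (x - y)]
    simp only [hF] at h1 ⊢
    push_cast
    nlinarith
  · -- convergence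
    intro x hx
    rw [Metric.tendsto_atTop]
    intro ε hε
    have hub : ∀ m, φk m x ≤ φ x := by
      intro m
      have := hle m x x hx
      simpa [hF] using this
    have hcw : ContinuousWithinAt φ K x := hcont x hx
    rw [Metric.continuousWithinAt_iff] at hcw
    obtain ⟨δ, hδ, hδ'⟩ := hcw (ε/2) (by linarith)
    obtain ⟨N, hN⟩ := exists_nat_ge (φ x / δ)
    refine ⟨N, fun m hm => ?_⟩
    have hlow : φ x - ε/2 ≤ φk m x := by
      refine hge m x _ ⟨x, hx⟩ fun y hy => ?_
      by_cases hcase : ‖x - y‖ < δ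
      · have : dist y x < δ := by
          rw [dist_eq_norm]
          rwa [show ‖y - x‖ = ‖x - y‖ from norm_sub_rev y x]
        have := hδ' hy this
        rw [Real.dist_eq, abs_sub_lt_iff] at this
        have hterm : 0 ≤ (m : ℝ) * ‖x - y‖ := by positivity
        simp only [hF]
        linarith [this.2]
      · push_neg at hcase
        have hmδ : φ x ≤ (m : ℝ) * δ := by
          have hNm : (N : ℝ) ≤ (m : ℝ) := Nat.cast_le.mpr hm
          have : φ x / δ ≤ (m : ℝ) := le_trans hN hNm
          calc φ x = (φ x / δ) * δ := by field_simp
            _ ≤ (m : ℝ) * δ := mul_le_mul_of_nonneg_right this (le_of_lt hδ)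
        have : (m : ℝ) * δ ≤ (m : ℝ) * ‖x - y‖ :=
          mul_le_mul_of_nonneg_left hcase (Nat.cast_nonneg m)
        have hφy := hnonneg y hy
        simp only [hF]
        linarith
    rw [Real.dist_eq, abs_sub_lt_iff]
    constructor
    · linarith [hub m]
    · linarith
end

section
/- Let (X,μ) be an arbitrary measure space, φ : ℝⁿ → ℝ a sublinear function (positively homogeneous and subadditive), and f ∈ L¹(X,ℝⁿ) with φ∘f integrable. Then φ(∫_X f dμ) ≤ ∫_X φ(f(x)) dμ(x). -/
/-!
By Hahn–Banach, a sublinear `φ` has a linear minorant `g` that agrees with `φ` at `v = ∫ f`.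
In finite dimensions `g` is continuous, so it commutes with the integral and
`φ (∫ f) = g (∫ f) = ∫ g ∘ f ≤ ∫ φ ∘ f`. Since `g` is linear rather than affine, no finiteness
of `μ` is needed, unlike for Jensen's inequality.
-/

open MeasureTheory

section Sublinear

variable {E : Type*} [AddCommGroup E] [Module ℝ E] {φ : E → ℝ}

theorem map_zero_of_sublinear (hhom : ∀ c : ℝ, 0 < c → ∀ x, φ (c • x) = c * φ x) : φ 0 = 0 := by
  have h := hhom 2 two_pos 0
  rw [smul_zero] at h
  linarith

theorem mul_le_map_smul_of_sublinear (hhom : ∀ c : ℝ, 0 < c → ∀ x, φ (c • x) = c * φ x)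
    (hsub : ∀ x y, φ (x + y) ≤ φ x + φ y) (c : ℝ) (x : E) : c * φ x ≤ φ (c • x) := by
  rcases lt_trichotomy c 0 with hc | rfl | hc
  · -- `0 = φ (c • x + (-c) • x) ≤ φ (c • x) - c * φ x`
    have h := hsub (c • x) ((-c) • x)
    rw [← add_smul, add_neg_cancel, zero_smul, map_zero_of_sublinear hhom,
      hhom (-c) (neg_pos.mpr hc)] at h
    linarith
  · simp [map_zero_of_sublinear hhom]
  · rw [hhom c hc]

theorem exists_linearMap_le_sublinear_eq (hhom : ∀ c : ℝ, 0 < c → ∀ x, φ (c • x) = c * φ x)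
    (hsub : ∀ x y, φ (x + y) ≤ φ x + φ y) (v : E) :
    ∃ g : E →ₗ[ℝ] ℝ, g v = φ v ∧ ∀ x, g x ≤ φ x := by
  have hker : ∀ c : ℝ, c • v = 0 → c • φ v = 0 := by
    intro c hc
    rcases eq_or_ne c 0 with rfl | hc0
    · exact zero_smul ℝ _
    · rw [(smul_eq_zero.mp hc).resolve_left hc0, map_zero_of_sublinear hhom, smul_zero]
  let f : E →ₗ.[ℝ] ℝ := LinearPMap.mkSpanSingleton' v (φ v) hker
  have hf : ∀ x : f.domain, f x ≤ φ x := by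
    rintro ⟨x, hx⟩
    obtain ⟨c, rfl⟩ := Submodule.mem_span_singleton.mp hx
    rw [LinearPMap.mkSpanSingleton'_apply, smul_eq_mul]
    exact mul_le_map_smul_of_sublinear hhom hsub c v
  obtain ⟨g, hgf, hgφ⟩ := exists_extension_of_le_sublinear f φ hhom hsub hf
  exact ⟨g, (hgf ⟨v, Submodule.mem_span_singleton_self v⟩).trans
    (LinearPMap.mkSpanSingleton'_apply_self (σ := RingHom.id ℝ) v (φ v) hker _), hgφ⟩

end Sublinear

theorem map_integral_le_integral_of_sublinear {X E : Type*} [MeasurableSpace X] {μ : Measure X}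
    [NormedAddCommGroup E] [NormedSpace ℝ E] [FiniteDimensional ℝ E] {φ : E → ℝ}
    (hhom : ∀ c : ℝ, 0 < c → ∀ x, φ (c • x) = c * φ x)
    (hsub : ∀ x y, φ (x + y) ≤ φ x + φ y) {f : X → E} (hf : Integrable f μ)
    (hφf : Integrable (fun x => φ (f x)) μ) :
    φ (∫ x, f x ∂μ) ≤ ∫ x, φ (f x) ∂μ := by
  obtain ⟨g, hgv, hgφ⟩ := exists_linearMap_le_sublinear_eq hhom hsub (∫ x, f x ∂μ)
  let G : E →L[ℝ] ℝ := LinearMap.toContinuousLinearMap g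
  calc φ (∫ x, f x ∂μ) = G (∫ x, f x ∂μ) := hgv.symm
    _ = ∫ x, G (f x) ∂μ := (G.integral_comp_comm hf).symm
    _ ≤ ∫ x, φ (f x) ∂μ := integral_mono (G.integrable_comp hf) hφf fun x => hgφ (f x)

theorem roselli_willem
    {n : ℕ} {X : Type*} [MeasurableSpace X] (μ : Measure X)
    (φ : (Fin n → ℝ) → ℝ)
    (hhom : ∀ l : ℝ, 0 ≤ l → ∀ x, φ (l • x) = l * φ x)
    (hsub : ∀ x y, φ (x + y) ≤ φ x + φ y)
    (f : X → Fin n → ℝ) (hf : Integrable f μ)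
    (hφf : Integrable (fun x => φ (f x)) μ) :
    φ (∫ x, f x ∂μ) ≤ ∫ x, φ (f x) ∂μ :=
  map_integral_le_integral_of_sublinear (fun c hc => hhom c hc.le) hsub hf hφf
end

section
/- Let (X,μ) and (Y,ν) be σ-finite measure spaces, S : L¹(Y) → L¹(X) a stochastic operator, and P = {E_i} a partition of X into disjoint sets of finite measure. Then the composition M_P ∘ S is a stochastic integral operator: there exists a measurable stochastic kernel K_P : X × Y → [0,∞) with ∫_X K_P(x,y) dμ(x) = 1 for ν-a.e. y, such that (M_P S f)(x) = ∫_Y K_P(x,y) f(y) dν(y) for all f ∈ L¹(Y). -/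
open MeasureTheory

/-- The averaging operator associated with a countable partition `P`. -/
noncomputable def partitionAverage {X : Type*} [MeasurableSpace X] (μ : Measure X)
    {ι : Type*} (P : ι → Set X) (f : X → ℝ) : X → ℝ :=
  fun x => ∑' i, (P i).indicator
    (fun _ => if μ (P i) = 0 then 0 else (μ (P i)).toReal⁻¹ * ∫ t in P i, f t ∂μ) x

/-!
Each cell gives a functional `ℓᵢ f = ∫_{Pᵢ} S f dμ` on `L¹(ν)`. It is positive, and continuous
because positivity and preservation of integrals make `S` a contraction (`|S f| ≤ S |f|`).
A positive functional on `L¹(ν)` defines a measure `ρᵢ(A) = ℓᵢ(1_A) ≤ ‖ℓᵢ‖ ν(A)`, glued from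
finite pieces over a disjoint cover of `Y` by sets of finite measure; its Radon–Nikodym density `gᵢ`
is therefore bounded, and represents `ℓᵢ` on indicators, hence on all of `L¹(ν)`. Since the cells
cover `X`, `∑ᵢ ℓᵢ f = ∫ S f = ∫ f`, which forces `∑ᵢ gᵢ = 1` a.e.; the kernel is
`K(x, y) = gᵢ(y) / μ(Pᵢ)` for `x ∈ Pᵢ`.
-/

open scoped ENNReal symmDiff

namespace MeasureTheory

section IndicatorConstLp

variable {α E ι : Type*} [MeasurableSpace α] {μ : Measure α} [NormedAddCommGroup E]
  {p : ℝ≥0∞} {B : ι → Set α}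

theorem sum_indicatorConstLp (hB : ∀ k, MeasurableSet (B k)) (hμB : ∀ k, μ (B k) ≠ ∞)
    (hd : Pairwise (Function.onFun Disjoint B)) (t : Finset ι) (c : E) :
    ∑ k ∈ t, indicatorConstLp p (hB k) (hμB k) c =
      indicatorConstLp p (t.measurableSet_biUnion fun k _ => hB k)
        (measure_biUnion_lt_top t.finite_toSet fun k _ => (hμB k).lt_top).ne c := by
  classical
  induction t using Finset.induction_on with
  | empty => simp
  | insert a t ha ih =>
    rw [Finset.sum_insert ha, ih, ← indicatorConstLp_disjoint_union]
    · congr 1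
      exact (Finset.set_biUnion_insert a t B).symm
    · exact Set.disjoint_iUnion₂_right.2 fun k hk => hd fun h => ha (h ▸ hk)

theorem hasSum_indicatorConstLp [Fact (1 ≤ p)] [Countable ι] (hp : p ≠ ∞)
    (hB : ∀ k, MeasurableSet (B k)) (hμB : ∀ k, μ (B k) ≠ ∞)
    (hd : Pairwise (Function.onFun Disjoint B)) {s : Set α} (hs : MeasurableSet s)
    (hμs : μ s ≠ ∞) (hBs : ⋃ k, B k = s) (c : E) :
    HasSum (fun k => indicatorConstLp p (hB k) (hμB k) c) (indicatorConstLp p hs hμs c) := by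
  have hsum : ∑' k, μ (B k) ≠ ∞ := by rwa [← measure_iUnion hd hB, hBs]
  have hrest : ∀ t : Finset ι, μ ((⋃ k ∈ t, B k) ∆ s) ≤ ∑' k : {k // k ∉ t}, μ (B k) := by
    intro t
    refine (measure_mono fun y hy => ?_).trans (measure_iUnion_le _)
    subst hBs
    simp only [Set.mem_symmDiff, Set.mem_iUnion] at hy
    obtain ⟨⟨k, _, hk⟩, hny⟩ | ⟨⟨k, hk⟩, hny⟩ := hy
    · exact absurd ⟨k, hk⟩ hny
    · exact Set.mem_iUnion.2 ⟨⟨k, fun ht => hny ⟨k, ht, hk⟩⟩, hk⟩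
  refine (tendsto_indicatorConstLp_set hp ?_).congr fun t =>
    (sum_indicatorConstLp hB hμB hd t c).symm
  exact tendsto_of_tendsto_of_tendsto_of_le_of_le tendsto_const_nhds
    (ENNReal.tendsto_tsum_compl_atTop_zero hsum) (fun _ => zero_le) hrest

theorem indicatorConstLp_smul {𝕜 : Type*} [NormedRing 𝕜] [Module 𝕜 E] [IsBoundedSMul 𝕜 E]
    {s : Set α} (hs : MeasurableSet s) (hμs : μ s ≠ ∞) (c : 𝕜) (e : E) :
    indicatorConstLp p hs hμs (c • e) = c • indicatorConstLp p hs hμs e := by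
  simp only [indicatorConstLp]
  rw [← MemLp.toLp_const_smul]
  congr 1
  ext y
  by_cases hy : y ∈ s <;> simp [hy]

theorem indicatorConstLp_one_nonneg {s : Set α} (hs : MeasurableSet s) (hμs : μ s ≠ ∞) :
    0 ≤ indicatorConstLp p hs hμs (1 : ℝ) := by
  rw [← Lp.coeFn_nonneg]
  filter_upwards [indicatorConstLp_coeFn (p := p) (hs := hs) (hμs := hμs) (c := (1 : ℝ))] with y hy
  rw [hy]
  exact Set.indicator_nonneg (fun _ _ => zero_le_one) y

end IndicatorConstLp

section NonnegFunctional

variable {Y : Type*} [MeasurableSpace Y] {ν : Measure Y} (ℓ : Lp ℝ 1 ν →L[ℝ] ℝ)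

theorem ofReal_apply_indicatorConstLp_le {A : Set Y} (hA : MeasurableSet A) (hμA : ν A ≠ ∞) :
    ENNReal.ofReal (ℓ (indicatorConstLp 1 hA hμA 1)) ≤ ‖ℓ‖ₑ * ν A := by
  have hnorm : ‖indicatorConstLp 1 hA hμA (1 : ℝ)‖ = ν.real A := by
    simp [norm_indicatorConstLp one_ne_zero ENNReal.one_ne_top]
  calc ENNReal.ofReal (ℓ (indicatorConstLp 1 hA hμA 1))
      ≤ ENNReal.ofReal (‖ℓ‖ * ν.real A) :=
        ENNReal.ofReal_le_ofReal ((le_abs_self _).trans (hnorm ▸ ℓ.le_opNorm _))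
    _ = ‖ℓ‖ₑ * ν A := by
        rw [ENNReal.ofReal_mul (norm_nonneg _), ofReal_norm, measureReal_def,
          ENNReal.ofReal_toReal hμA]

noncomputable def nonnegFunctionalMeasureOn (hℓ : ∀ f, 0 ≤ f → 0 ≤ ℓ f) {T : Set Y}
    (hT : MeasurableSet T) (hμT : ν T ≠ ∞) :
    Measure Y :=
  Measure.ofMeasurable
    (fun A hA => ENNReal.ofReal
      (ℓ (indicatorConstLp 1 (hA.inter hT) (measure_inter_lt_top_of_right_ne_top hμT).ne 1)))
    (by simp)
    (by
      intro A hA hd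
      have hsum := ℓ.hasSum (hasSum_indicatorConstLp ENNReal.one_ne_top
        (fun k => (hA k).inter hT) (fun k => (measure_inter_lt_top_of_right_ne_top hμT).ne)
        (fun j k hjk => (hd hjk).mono Set.inter_subset_left Set.inter_subset_left)
        ((MeasurableSet.iUnion hA).inter hT) (measure_inter_lt_top_of_right_ne_top hμT).ne
        (Set.iUnion_inter T A).symm (1 : ℝ))
      rw [← hsum.tsum_eq, ENNReal.ofReal_tsum_of_nonneg
        (fun k => hℓ _ (indicatorConstLp_one_nonneg _ _)) hsum.summable])

instance (hℓ : ∀ f, 0 ≤ f → 0 ≤ ℓ f) {T : Set Y} (hT : MeasurableSet T) (hμT : ν T ≠ ∞) :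
    IsFiniteMeasure (nonnegFunctionalMeasureOn ℓ hℓ hT hμT) :=
  ⟨by simp [nonnegFunctionalMeasureOn, Measure.ofMeasurable_apply _ MeasurableSet.univ]⟩

theorem nonnegFunctionalMeasureOn_apply (hℓ : ∀ f, 0 ≤ f → 0 ≤ ℓ f) {T : Set Y}
    (hT : MeasurableSet T) (hμT : ν T ≠ ∞) {A : Set Y} (hA : MeasurableSet A) :
    nonnegFunctionalMeasureOn ℓ hℓ hT hμT A = ENNReal.ofReal
      (ℓ (indicatorConstLp 1 (hA.inter hT) (measure_inter_lt_top_of_right_ne_top hμT).ne 1)) :=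
  Measure.ofMeasurable_apply A hA

theorem exists_measure_eq_ofReal_apply_indicatorConstLp [SigmaFinite ν]
    (hℓ : ∀ f, 0 ≤ f → 0 ≤ ℓ f) :
    ∃ ρ : Measure Y, SFinite ρ ∧ ∀ (A : Set Y) (hA : MeasurableSet A) (hμA : ν A ≠ ∞),
      ρ A = ENNReal.ofReal (ℓ (indicatorConstLp 1 hA hμA 1)) := by
  set C := disjointed (spanningSets ν)
  have hC n : MeasurableSet (C n) := MeasurableSet.disjointed (measurableSet_spanningSets ν) n
  have hμC n : ν (C n) ≠ ∞ :=
    ((measure_mono (disjointed_subset _ n)).trans_lt (measure_spanningSets_lt_top ν n)).ne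
  refine ⟨Measure.sum fun n => nonnegFunctionalMeasureOn ℓ hℓ (hC n) (hμC n), inferInstance,
    fun A hA hμA => ?_⟩
  have hsum := ℓ.hasSum (hasSum_indicatorConstLp ENNReal.one_ne_top (fun n => hA.inter (hC n))
    (fun n => (measure_inter_lt_top_of_right_ne_top (hμC n)).ne)
    (fun j k hjk => (disjoint_disjointed _ hjk).mono Set.inter_subset_right Set.inter_subset_right)
    hA hμA (by rw [← Set.inter_iUnion, iUnion_disjointed, iUnion_spanningSets, Set.inter_univ])
    (1 : ℝ))
  simp only [Measure.sum_apply _ hA, nonnegFunctionalMeasureOn_apply _ _ _ _ hA]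
  rw [← hsum.tsum_eq, ENNReal.ofReal_tsum_of_nonneg
    (fun n => hℓ _ (indicatorConstLp_one_nonneg _ _)) hsum.summable]

theorem ae_le_enorm_of_setLIntegral_eq [SigmaFinite ν] {g : Y → ℝ≥0∞} (hg : Measurable g)
    (hgℓ : ∀ (A : Set Y) (hA : MeasurableSet A) (hμA : ν A ≠ ∞),
      ∫⁻ y in A, g y ∂ν = ENNReal.ofReal (ℓ (indicatorConstLp 1 hA hμA 1))) :
    ∀ᵐ y ∂ν, g y ≤ ‖ℓ‖ₑ :=
  ae_le_of_forall_setLIntegral_le_of_sigmaFinite hg fun A hA hμA => by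
    rw [hgℓ A hA hμA.ne, setLIntegral_const]
    exact ofReal_apply_indicatorConstLp_le ℓ hA hμA.ne

theorem eq_integral_mul_of_apply_indicatorConstLp_eq {h : Y → ℝ} (hh : MemLp h ∞ ν)
    (hℓh : ∀ (A : Set Y) (hA : MeasurableSet A) (hμA : ν A ≠ ∞),
      ℓ (indicatorConstLp 1 hA hμA 1) = ∫ y in A, h y ∂ν) (f : Lp ℝ 1 ν) :
    ℓ f = ∫ y, h y * f y ∂ν := by
  set H : Lp ℝ 1 ν →L[ℝ] ℝ := (ContinuousLinearMap.mul ℝ ℝ).lpPairing ν ∞ 1 (hh.toLp h)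
  have hH (u : Lp ℝ 1 ν) : H u = ∫ y, h y * u y ∂ν := by
    rw [ContinuousLinearMap.lpPairing_eq_integral]
    refine integral_congr_ae ?_
    filter_upwards [hh.coeFn_toLp] with y hy
    simp [hy]
  rw [← hH]
  refine Lp.induction ENNReal.one_ne_top (fun u => ℓ u = H u) (fun c A hA hμA => ?_)
    (fun u v _ _ _ hu hv => by rw [map_add, map_add, hu, hv])
    (isClosed_eq ℓ.continuous H.continuous) f
  have h1A : H (indicatorConstLp 1 hA hμA.ne 1) = ∫ y in A, h y ∂ν := by
    rw [hH, ← integral_indicator hA]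
    refine integral_congr_ae ?_
    filter_upwards [indicatorConstLp_coeFn (p := 1) (hs := hA) (hμs := hμA.ne) (c := (1 : ℝ))]
      with y hy
    by_cases hyA : y ∈ A <;> simp [hy, hyA]
  rw [Lp.simpleFunc.coe_indicatorConst, ← mul_one c, ← smul_eq_mul, indicatorConstLp_smul, map_smul,
    map_smul, hℓh, h1A]

theorem exists_density_of_nonneg [SigmaFinite ν] (hℓ : ∀ f, 0 ≤ f → 0 ≤ ℓ f) :
    ∃ g : Y → ℝ≥0∞, Measurable g ∧ (∀ᵐ y ∂ν, g y ≤ ‖ℓ‖ₑ) ∧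
      (∀ (A : Set Y) (hA : MeasurableSet A) (hμA : ν A ≠ ∞),
        ∫⁻ y in A, g y ∂ν = ENNReal.ofReal (ℓ (indicatorConstLp 1 hA hμA 1))) ∧
      ∀ f, ℓ f = ∫ y, (g y).toReal * f y ∂ν := by
  obtain ⟨ρ, _, hρ⟩ := exists_measure_eq_ofReal_apply_indicatorConstLp ℓ hℓ
  have hac : ρ ≪ ν := Measure.AbsolutelyContinuous.mk fun A hA hνA => by
    have hμA : ν A ≠ ∞ := by simp [hνA]
    simpa [hνA] using (hρ A hA hμA).trans_le (ofReal_apply_indicatorConstLp_le ℓ hA hμA)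
  set g := ρ.rnDeriv ν
  have hg : Measurable g := Measure.measurable_rnDeriv ρ ν
  have hgℓ (A : Set Y) (hA : MeasurableSet A) (hμA : ν A ≠ ∞) :
      ∫⁻ y in A, g y ∂ν = ENNReal.ofReal (ℓ (indicatorConstLp 1 hA hμA 1)) := by
    rw [Measure.setLIntegral_rnDeriv hac, hρ A hA hμA]
  have hbound := ae_le_enorm_of_setLIntegral_eq ℓ hg hgℓ
  refine ⟨g, hg, hbound, hgℓ,
    eq_integral_mul_of_apply_indicatorConstLp_eq ℓ ?_ fun A hA hμA => ?_⟩
  · refine memLp_top_of_bound hg.ennreal_toReal.aestronglyMeasurable ‖ℓ‖ ?_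
    filter_upwards [hbound] with y hy
    rw [Real.norm_of_nonneg ENNReal.toReal_nonneg]
    exact ENNReal.toReal_le_of_le_ofReal (norm_nonneg _) (hy.trans_eq (ofReal_norm ℓ).symm)
  · rw [integral_toReal hg.aemeasurable
      (ae_restrict_of_ae (hbound.mono fun y hy => hy.trans_lt enorm_lt_top)),
      hgℓ A hA hμA, ENNReal.toReal_ofReal (hℓ _ (indicatorConstLp_one_nonneg hA hμA))]

theorem ae_tsum_eq_one_of_hasSum_integral [SigmaFinite ν] {ι : Type*} [Countable ι]
    (ℓ : ι → Lp ℝ 1 ν →L[ℝ] ℝ) (hℓ : ∀ i f, 0 ≤ f → 0 ≤ ℓ i f)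
    (hsum : ∀ f, HasSum (fun i => ℓ i f) (∫ y, f y ∂ν)) {g : ι → Y → ℝ≥0∞}
    (hg : ∀ i, Measurable (g i))
    (hgℓ : ∀ i (A : Set Y) (hA : MeasurableSet A) (hμA : ν A ≠ ∞),
      ∫⁻ y in A, g i y ∂ν = ENNReal.ofReal (ℓ i (indicatorConstLp 1 hA hμA 1))) :
    ∀ᵐ y ∂ν, ∑' i, g i y = 1 := by
  refine ae_eq_of_forall_setLIntegral_eq_of_sigmaFinite (Measurable.tsum hg)
    measurable_const fun A hA hμA => ?_
  have hsumA := hsum (indicatorConstLp 1 hA hμA.ne 1)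
  rw [lintegral_tsum fun i => (hg i).aemeasurable, setLIntegral_const, one_mul]
  simp only [hgℓ _ A hA hμA.ne]
  rw [← ENNReal.ofReal_tsum_of_nonneg (fun i => hℓ i _ (indicatorConstLp_one_nonneg _ _))
    hsumA.summable, hsumA.tsum_eq, integral_indicatorConstLp, smul_eq_mul, mul_one, measureReal_def,
    ENNReal.ofReal_toReal hμA.ne]

end NonnegFunctional

section StochasticOperator

variable {X Y : Type*} [MeasurableSpace X] [MeasurableSpace Y] {μ : Measure X} {ν : Measure Y}

theorem L1.norm_eq_integral_of_nonneg {u : Lp ℝ 1 μ} (hu : 0 ≤ u) : ‖u‖ = ∫ x, u x ∂μ := by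
  rw [L1.norm_eq_integral_norm]
  refine integral_congr_ae ?_
  filter_upwards [(Lp.coeFn_nonneg u).2 hu] with x hx
  exact Real.norm_of_nonneg hx

theorem norm_apply_le_of_nonneg_of_integral_eq (S : Lp ℝ 1 ν →ₗ[ℝ] Lp ℝ 1 μ)
    (hSpos : ∀ u, 0 ≤ u → 0 ≤ S u) (hSint : ∀ u, ∫ x, S u x ∂μ = ∫ y, u y ∂ν)
    (f : Lp ℝ 1 ν) : ‖S f‖ ≤ ‖f‖ := by
  have habs : |S f| ≤ S |f| := abs_le'.2
    ⟨sub_nonneg.1 (map_sub S |f| f ▸ hSpos _ (sub_nonneg.2 (le_abs_self f))),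
      neg_le_iff_add_nonneg.2 (map_add S |f| f ▸ hSpos _ (neg_le_iff_add_nonneg.1 (neg_le_abs f)))⟩
  have hSabs : 0 ≤ S |f| := hSpos _ (abs_nonneg f)
  calc ‖S f‖ ≤ ‖S |f|‖ := norm_le_norm_of_abs_le_abs (habs.trans_eq (abs_of_nonneg hSabs).symm)
    _ = ∫ y, |f| y ∂ν := by rw [L1.norm_eq_integral_of_nonneg hSabs, hSint]
    _ = ‖f‖ := by rw [← L1.norm_eq_integral_of_nonneg (abs_nonneg f), norm_abs_eq_norm]

theorem exists_nonneg_clm_eq_setIntegral (S : Lp ℝ 1 ν →ₗ[ℝ] Lp ℝ 1 μ)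
    (hSpos : ∀ u, 0 ≤ u → 0 ≤ S u) (hSint : ∀ u, ∫ x, S u x ∂μ = ∫ y, u y ∂ν) (E : Set X) :
    ∃ ℓ : Lp ℝ 1 ν →L[ℝ] ℝ, (∀ f, 0 ≤ f → 0 ≤ ℓ f) ∧ ∀ f, ℓ f = ∫ x in E, S f x ∂μ := by
  set ℓ : Lp ℝ 1 ν →L[ℝ] ℝ := L1.integralCLM.comp ((LpToLpRestrictCLM X ℝ ℝ μ 1 E).comp
    (S.mkContinuous 1 fun f => by
      simpa using norm_apply_le_of_nonneg_of_integral_eq S hSpos hSint f))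
  have hℓ (f : Lp ℝ 1 ν) : ℓ f = ∫ x in E, S f x ∂μ := by
    simp only [ℓ, ContinuousLinearMap.comp_apply, LinearMap.mkContinuous_apply]
    rw [← L1.integral_def, L1.integral_eq_integral]
    exact integral_congr_ae (LpToLpRestrictCLM_coeFn ℝ E (S f))
  refine ⟨ℓ, fun f hf => ?_, hℓ⟩
  rw [hℓ]
  exact integral_nonneg_of_ae (ae_restrict_of_ae ((Lp.coeFn_nonneg _).2 (hSpos f hf)))

end StochasticOperator
end MeasureTheory

section Partition

variable {X Y ι : Type*} {P : ι → Set X}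

theorem tsum_indicator_eq_of_mem {β : Type*} [AddCommMonoid β] [TopologicalSpace β]
    (hdisj : Pairwise (Function.onFun Disjoint P)) (F : ι → X → β) {x : X} {j : ι}
    (hx : x ∈ P j) : ∑' i, (P i).indicator (F i) x = F j x := by
  rw [tsum_eq_single j fun i hij =>
    Set.indicator_of_notMem (fun hxi => Set.disjoint_left.1 (hdisj hij) hxi hx) _]
  exact Set.indicator_of_mem hx _

variable [MeasurableSpace X] {μ : Measure X}

theorem partitionAverage_of_mem (hdisj : Pairwise (Function.onFun Disjoint P)) (f : X → ℝ)
    {x : X} {j : ι} (hx : x ∈ P j) :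
    partitionAverage μ P f x = (μ (P j)).toReal⁻¹ * ∫ t in P j, f t ∂μ := by
  rw [partitionAverage, tsum_indicator_eq_of_mem hdisj _ hx]
  split_ifs with h <;> simp [h]

/-- On a null cell the coefficient `(μ (P i))⁻¹` is `∞`; the real kernel `toReal` of it vanishes
there, as does `partitionAverage`. -/
noncomputable def partitionKernel (μ : Measure X) (P : ι → Set X) (g : ι → Y → ℝ≥0∞)
    (x : X) (y : Y) : ℝ≥0∞ :=
  ∑' i, (P i).indicator (fun _ => (μ (P i))⁻¹ * g i y) x

variable {g : ι → Y → ℝ≥0∞}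

theorem partitionKernel_of_mem (hdisj : Pairwise (Function.onFun Disjoint P)) {x : X} {j : ι}
    (hx : x ∈ P j) (y : Y) : partitionKernel μ P g x y = (μ (P j))⁻¹ * g j y :=
  tsum_indicator_eq_of_mem hdisj _ hx

theorem measurable_partitionKernel [MeasurableSpace Y] [Countable ι]
    (hP : ∀ i, MeasurableSet (P i)) (hg : ∀ i, Measurable (g i)) :
    Measurable (Function.uncurry (partitionKernel μ P g)) := by
  show Measurable fun p : X × Y => ∑' i, (P i).indicator (fun _ => (μ (P i))⁻¹ * g i p.2) p.1
  exact Measurable.tsum fun i =>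
    (measurable_const.mul ((hg i).comp measurable_snd)).indicator (measurable_fst (hP i))

theorem lintegral_partitionKernel [Countable ι] (hP : ∀ i, MeasurableSet (P i))
    (hμP : ∀ i, μ (P i) < ∞) {y : Y} (hnull : ∀ i, μ (P i) = 0 → g i y = 0) :
    ∫⁻ x, partitionKernel μ P g x y ∂μ = ∑' i, g i y := by
  simp only [partitionKernel]
  rw [lintegral_tsum fun i => (measurable_const.indicator (hP i)).aemeasurable]
  refine tsum_congr fun i => ?_
  rw [lintegral_indicator_const (hP i)]
  by_cases h : μ (P i) = 0
  · simp [h, hnull i h]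
  · rw [mul_comm, ← mul_assoc, ENNReal.mul_inv_cancel h (hμP i).ne, one_mul]

end Partition

theorem average_of_stochastic_is_integral_operator_general
    {X Y : Type*} [MeasurableSpace X] [MeasurableSpace Y]
    (μ : Measure X) (ν : Measure Y) [SigmaFinite ν]
    (S : Lp ℝ 1 ν →ₗ[ℝ] Lp ℝ 1 μ)
    (hSpos : ∀ u : Lp ℝ 1 ν, 0 ≤ u → 0 ≤ S u)
    (hSint : ∀ u : Lp ℝ 1 ν, ∫ x, S u x ∂μ = ∫ y, u y ∂ν)
    (P : ℕ → Set X) (hmeas : ∀ i, MeasurableSet (P i))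
    (hdisj : Pairwise (Function.onFun Disjoint P))
    (hcover : (⋃ i, P i) = Set.univ)
    (hfin : ∀ i, μ (P i) < ⊤) :
    ∃ K : X → Y → ℝ,
      Measurable (Function.uncurry K) ∧
      (∀ x y, 0 ≤ K x y) ∧
      (∀ᵐ y ∂ν, ∫ x, K x y ∂μ = 1) ∧
      (∀ f : Lp ℝ 1 ν, ∀ x : X,
        partitionAverage μ P (S f) x = ∫ y, K x y * f y ∂ν) := by
  choose ℓ hℓpos hℓ using fun i => exists_nonneg_clm_eq_setIntegral S hSpos hSint (P i)
  choose g hg hgbound hgℓ hgrep using fun i => exists_density_of_nonneg (ℓ i) (hℓpos i)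
  have hsum (f : Lp ℝ 1 ν) : HasSum (fun i => ℓ i f) (∫ y, f y ∂ν) := by
    simpa only [hℓ, hcover, Measure.restrict_univ, hSint] using
      hasSum_integral_iUnion hmeas hdisj (L1.integrable_coeFn (S f)).integrableOn
  have hnull : ∀ᵐ y ∂ν, ∀ i, μ (P i) = 0 → g i y = 0 := by
    refine ae_all_iff.2 fun i => (hgbound i).mono fun y hy hi => ?_
    have : ℓ i = 0 := ContinuousLinearMap.ext fun f => by
      rw [hℓ, setIntegral_measure_zero _ hi]; rfl
    rw [this, enorm_eq_nnnorm, nnnorm_zero, ENNReal.coe_zero] at hy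
    exact nonpos_iff_eq_zero.1 hy
  have hK := measurable_partitionKernel (μ := μ) hmeas hg
  refine ⟨fun x y => (partitionKernel μ P g x y).toReal, hK.ennreal_toReal,
    fun _ _ => ENNReal.toReal_nonneg, ?_, fun f x => ?_⟩
  · filter_upwards [ae_tsum_eq_one_of_hasSum_integral ℓ hℓpos hsum hg hgℓ, hnull] with y hy1 hy0
    have hlint := (lintegral_partitionKernel hmeas hfin hy0).trans hy1
    rw [integral_toReal hK.of_uncurry_right.aemeasurable
      (ae_lt_top hK.of_uncurry_right (hlint ▸ ENNReal.one_ne_top)), hlint, ENNReal.toReal_one]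
  · obtain ⟨j, hj⟩ := Set.mem_iUnion.1 (hcover.symm ▸ Set.mem_univ x)
    simp only [partitionAverage_of_mem hdisj _ hj, partitionKernel_of_mem hdisj hj,
      ENNReal.toReal_mul, ENNReal.toReal_inv, mul_assoc, integral_const_mul, ← hgrep, hℓ]

theorem average_of_stochastic_is_integral_operator
    {X Y : Type*} [MeasurableSpace X] [MeasurableSpace Y]
    (μ : Measure X) (ν : Measure Y) [SigmaFinite μ] [SigmaFinite ν]
    (S : Lp ℝ 1 ν →ₗ[ℝ] Lp ℝ 1 μ)
    (hSpos : ∀ u : Lp ℝ 1 ν, 0 ≤ u → 0 ≤ S u)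
    (hSint : ∀ u : Lp ℝ 1 ν, ∫ x, S u x ∂μ = ∫ y, u y ∂ν)
    (P : ℕ → Set X) (hmeas : ∀ i, MeasurableSet (P i))
    (hdisj : Pairwise (Function.onFun Disjoint P))
    (hcover : (⋃ i, P i) = Set.univ)
    (hfin : ∀ i, μ (P i) < ⊤) :
    ∃ K : X → Y → ℝ,
      Measurable (Function.uncurry K) ∧
      (∀ x y, 0 ≤ K x y) ∧
      (∀ᵐ y ∂ν, ∫ x, K x y ∂μ = 1) ∧
      (∀ f : Lp ℝ 1 ν, ∀ x : X,
        partitionAverage μ P (S f) x = ∫ y, K x y * f y ∂ν) :=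
  average_of_stochastic_is_integral_operator_general μ ν S hSpos hSint P hmeas hdisj hcover hfin
end

section
/- Let (X,μ) and (Y,ν) be σ-finite measure spaces, S : L¹(Y) → L¹(X) a stochastic operator, and V a finite-dimensional subspace of L¹(Y). Then there exists a sequence (S_k) of stochastic integral operators from L¹(Y) to L¹(X) such that S_k f → S f in L¹ norm for every f ∈ V. -/
/-!
Approximate finitely many vectors spanning `V` by simple functions and let `π` be the partition
of `Y` into their joint level sets. The operator `f ↦ ∑ᵢ (∫_{π⁻¹{i}} f) • S 𝟙_{π⁻¹{i}} / ν(π⁻¹{i})`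
(with a fixed probability density `S u` replacing the last factor on cells of measure `0` or `∞`)
has the stochastic kernel `K x y = S 𝟙_{π⁻¹{π y}} x / ν(π⁻¹{π y})` and agrees with `S` on the
simple approximants, which vanish on the cells of infinite measure. Stochastic operators are
`L¹`-contractions, so this operator is `2ε`-close to `S` on the spanning vectors; letting `ε → 0`
gives convergence on the span by linearity.
-/

open MeasureTheory Filter Set Topology
open scoped ENNReal

noncomputable section

namespace MeasureTheory

variable {X Y ι : Type*} [MeasurableSpace X] [MeasurableSpace Y] {μ : Measure X} {ν : Measure Y}

structure IsStochastic (S : Lp ℝ 1 ν →ₗ[ℝ] Lp ℝ 1 μ) : Prop where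
  map_nonneg : ∀ u, 0 ≤ u → 0 ≤ S u
  integral_map : ∀ u, ∫ x, S u x ∂μ = ∫ y, u y ∂ν

def IsStochasticIntegralOperator (T : Lp ℝ 1 ν →ₗ[ℝ] Lp ℝ 1 μ) : Prop :=
  ∃ K : X → Y → ℝ, Measurable (Function.uncurry K) ∧ (∀ x y, 0 ≤ K x y) ∧
    (∀ᵐ y ∂ν, ∫ x, K x y ∂μ = 1) ∧ ∀ f, (T f : X → ℝ) =ᵐ[μ] fun x => ∫ y, K x y * f y ∂ν

instance {p : ENNReal} : PosSMulMono ℝ (Lp ℝ p ν) :=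
  PosSMulMono.of_smul_nonneg fun c hc f hf => by
    rw [← Lp.coeFn_nonneg] at hf ⊢
    filter_upwards [Lp.coeFn_smul c f, hf] with y hcf hfy
    rw [hcf]
    exact smul_nonneg hc hfy

theorem indicatorConstLp_nonneg {p : ENNReal} {s : Set Y} (hs : MeasurableSet s) (hνs : ν s ≠ ∞)
    {c : ℝ} (hc : 0 ≤ c) : 0 ≤ indicatorConstLp p hs hνs c := by
  rw [← Lp.coeFn_nonneg]
  filter_upwards [indicatorConstLp_coeFn (p := p) (hs := hs) (hμs := hνs) (c := c)] with y hy
  rw [hy]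
  exact indicator_nonneg (fun _ _ => hc) y

theorem L1.norm_eq_integral_of_nonneg_s15 {f : Lp ℝ 1 ν} (hf : 0 ≤ f) : ‖f‖ = ∫ y, f y ∂ν := by
  rw [L1.norm_eq_integral_norm]
  refine integral_congr_ae ?_
  filter_upwards [(Lp.coeFn_nonneg f).2 hf] with y hy
  exact Real.norm_of_nonneg hy

section SetIntegral

variable {E : Type*} [NormedAddCommGroup E] [NormedSpace ℝ E]

def L1.setIntegralCLM [CompleteSpace E] (s : Set Y) : Lp E 1 ν →L[ℝ] E :=
  L1.integralCLM.comp (LpToLpRestrictCLM Y E ℝ ν 1 s)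

theorem L1.setIntegralCLM_apply [CompleteSpace E] (s : Set Y) (f : Lp E 1 ν) :
    L1.setIntegralCLM s f = ∫ y in s, f y ∂ν := by
  rw [L1.setIntegralCLM, ContinuousLinearMap.comp_apply, ← L1.integral_eq,
    L1.integral_eq_integral]
  exact integral_congr_ae (LpToLpRestrictCLM_coeFn ℝ s f)

theorem SimpleFunc.integral_eq_sum_setIntegral_preimage (π : SimpleFunc Y ι) {F : Y → E}
    (hF : Integrable F ν) : ∫ y, F y ∂ν = ∑ i ∈ π.range, ∫ y in π ⁻¹' {i}, F y ∂ν := by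
  rw [← integral_biUnion_finset _ (fun i _ => π.measurableSet_fiber i)
    (fun i _ j _ hij => (Set.disjoint_singleton.2 hij).preimage π) fun i _ => hF.integrableOn]
  have hcover : (⋃ i ∈ π.range, π ⁻¹' {i}) = univ := by
    ext y
    simp
  rw [hcover, Measure.restrict_univ]

end SetIntegral

def SimpleFunc.pi {κ β : Type*} [Finite κ] (f : κ → SimpleFunc Y β) : SimpleFunc Y (κ → β) where
  toFun y k := f k y
  measurableSet_fiber' b := by
    convert MeasurableSet.iInter fun k => (f k).measurableSet_fiber (b k)
    ext y
    simp [funext_iff]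
  finite_range' := (Set.Finite.pi' fun k => (f k).finite_range).subset <| by
    rintro _ ⟨y, rfl⟩ k
    exact ⟨y, rfl⟩

theorem tendsto_apply_of_mem_span {R M N α : Type*} [Semiring R] [AddCommMonoid M] [Module R M]
    [AddCommMonoid N] [Module R N] [TopologicalSpace N] [ContinuousAdd N] [ContinuousConstSMul R N]
    {l : Filter α} {T : α → M →ₗ[R] N} {S : M →ₗ[R] N} {s : Set M}
    (h : ∀ v ∈ s, Tendsto (fun a => T a v) l (𝓝 (S v))) {v : M} (hv : v ∈ Submodule.span R s) :
    Tendsto (fun a => T a v) l (𝓝 (S v)) := by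
  induction hv using Submodule.span_induction with
  | mem v hv => exact h v hv
  | zero => simpa using tendsto_const_nhds
  | add v w _ _ hv hw => simpa using hv.add hw
  | smul c v _ hv => simpa using hv.const_smul c

namespace IsStochastic

variable {S T : Lp ℝ 1 ν →ₗ[ℝ] Lp ℝ 1 μ}

theorem norm_map_le (hS : IsStochastic S) (u : Lp ℝ 1 ν) : ‖S u‖ ≤ ‖u‖ := by
  have hmono : ∀ v w, v ≤ w → S v ≤ S w := fun v w hvw => by
    simpa using hS.map_nonneg (w - v) (sub_nonneg.2 hvw)
  have habs : |S u| ≤ |S (|u|)| := by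
    rw [abs_of_nonneg (hS.map_nonneg _ (abs_nonneg u)), abs_le', ← map_neg]
    exact ⟨hmono _ _ (le_abs_self u), hmono _ _ (neg_le_abs u)⟩
  calc ‖S u‖ ≤ ‖S (|u|)‖ := norm_le_norm_of_abs_le_abs habs
    _ = ∫ y, |u| y ∂ν := by
      rw [L1.norm_eq_integral_of_nonneg_s15 (hS.map_nonneg _ (abs_nonneg u)), hS.integral_map]
    _ = ‖u‖ := by rw [← L1.norm_eq_integral_of_nonneg_s15 (abs_nonneg u), norm_abs_eq_norm]

theorem norm_sub_map_le (hT : IsStochastic T) (hS : IsStochastic S) {w : Lp ℝ 1 ν}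
    (hw : T w = S w) (v : Lp ℝ 1 ν) : ‖T v - S v‖ ≤ 2 * ‖v - w‖ :=
  calc ‖T v - S v‖ = ‖T (v - w) - S (v - w)‖ := by
        rw [map_sub, map_sub, hw, sub_sub_sub_cancel_right]
    _ ≤ ‖T (v - w)‖ + ‖S (v - w)‖ := norm_sub_le _ _
    _ ≤ ‖v - w‖ + ‖v - w‖ := add_le_add (hT.norm_map_le _) (hS.norm_map_le _)
    _ = 2 * ‖v - w‖ := (two_mul _).symm

end IsStochastic

theorem exists_L1_nonneg_integral_eq_one [SigmaFinite ν] (hν : ν ≠ 0) :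
    ∃ u : Lp ℝ 1 ν, 0 ≤ u ∧ ∫ y, u y ∂ν = 1 := by
  obtain ⟨t, ht, -, ht0, htfin⟩ :=
    Measure.exists_subset_measure_lt_top MeasurableSet.univ (Measure.measure_univ_pos.2 hν)
  have htR : ν.real t ≠ 0 := ENNReal.toReal_ne_zero.2 ⟨ht0.ne', htfin.ne⟩
  refine ⟨indicatorConstLp 1 ht htfin.ne (ν.real t)⁻¹,
    indicatorConstLp_nonneg ht htfin.ne (inv_nonneg.2 measureReal_nonneg), ?_⟩
  rw [integral_indicatorConstLp, smul_eq_mul, mul_inv_cancel₀ htR]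

section Cells

variable (ν) in
def cellOperator (π : SimpleFunc Y ι) (G : ι → Lp ℝ 1 μ) : Lp ℝ 1 ν →ₗ[ℝ] Lp ℝ 1 μ :=
  ∑ i ∈ π.range, (L1.setIntegralCLM (E := ℝ) (ν := ν) (π ⁻¹' {i})).toLinearMap.smulRight (G i)

variable {π : SimpleFunc Y ι} {G : ι → Lp ℝ 1 μ}

theorem cellOperator_apply (f : Lp ℝ 1 ν) :
    cellOperator ν π G f = ∑ i ∈ π.range, (∫ y in π ⁻¹' {i}, f y ∂ν) • G i := by
  simp [cellOperator, L1.setIntegralCLM_apply]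

theorem isStochastic_cellOperator (hG0 : ∀ i, 0 ≤ G i) (hG1 : ∀ i, ∫ x, G i x ∂μ = 1) :
    IsStochastic (cellOperator ν π G) where
  map_nonneg f hf := by
    rw [cellOperator_apply]
    refine Finset.sum_nonneg fun i _ => smul_nonneg (integral_nonneg_of_ae ?_) (hG0 i)
    exact ae_restrict_of_ae ((Lp.coeFn_nonneg f).2 hf)
  integral_map f := by
    rw [π.integral_eq_sum_setIntegral_preimage (L1.integrable_coeFn f), ← L1.integral_eq_integral,
      L1.integral_eq, cellOperator_apply, map_sum]
    refine Finset.sum_congr rfl fun i _ => ?_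
    rw [map_smul, ← L1.integral_eq, L1.integral_eq_integral, hG1, smul_eq_mul, mul_one]

theorem isStochasticIntegralOperator_cellOperator (hG0 : ∀ i, 0 ≤ G i)
    (hG1 : ∀ i, ∫ x, G i x ∂μ = 1) : IsStochasticIntegralOperator (cellOperator ν π G) := by
  set g : ι → X → ℝ := fun i x => max (G i x) 0
  have hg : ∀ i, G i =ᵐ[μ] g i := fun i => by
    filter_upwards [(Lp.coeFn_nonneg _).2 (hG0 i)] with x hx using (max_eq_left hx).symm
  refine ⟨fun x y => g (π y) x, ?_, fun x y => le_max_right _ _, ae_of_all _ fun y => ?_,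
    fun f => ?_⟩
  · exact (π.comp Prod.snd measurable_snd).measurable_bind (fun i p => g i p.1) fun i =>
      ((Lp.stronglyMeasurable (G i)).measurable.max measurable_const).comp measurable_fst
  · rw [← integral_congr_ae (hg _), hG1]
  · filter_upwards [Lp.coeFn_fun_finsetSum π.range fun i => (∫ y in π ⁻¹' {i}, f y ∂ν) • G i,
      (eventually_all_finset π.range).2 fun i _ => Lp.coeFn_smul (∫ y in π ⁻¹' {i}, f y ∂ν) (G i),
      (eventually_all_finset π.range).2 fun i _ => hg i] with x hsum hsmul hgx
    have hint : Integrable (fun y => g (π y) x * f y) ν :=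
      (L1.integrable_coeFn f).simpleFunc_mul (π.map fun i => g i x)
    rw [cellOperator_apply, hsum, π.integral_eq_sum_setIntegral_preimage hint]
    refine Finset.sum_congr rfl fun i hi => ?_
    rw [hsmul i hi, Pi.smul_apply, smul_eq_mul, hgx i hi, mul_comm, ← integral_const_mul]
    refine setIntegral_congr_fun (π.measurableSet_fiber i) fun y (hy : π y = i) => ?_
    rw [hy]

variable (ν π) in
/-- The indicator of the cell `π ⁻¹' {i}` in `L¹`; junk value `0` if the cell has infinite
measure. -/
def cellIndicator (i : ι) : Lp ℝ 1 ν :=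
  if h : ν (π ⁻¹' {i}) = ∞ then 0 else indicatorConstLp 1 (π.measurableSet_fiber i) h 1

theorem cellIndicator_of_ne_top {i : ι} (h : ν (π ⁻¹' {i}) ≠ ∞) :
    cellIndicator ν π i = indicatorConstLp 1 (π.measurableSet_fiber i) h 1 :=
  dif_neg h

theorem cellIndicator_nonneg (i : ι) : 0 ≤ cellIndicator ν π i := by
  by_cases h : ν (π ⁻¹' {i}) = ∞
  · rw [cellIndicator, dif_pos h]
  · rw [cellIndicator_of_ne_top h]
    exact indicatorConstLp_nonneg _ h zero_le_one

theorem integral_cellIndicator (i : ι) : ∫ y, cellIndicator ν π i y ∂ν = ν.real (π ⁻¹' {i}) := by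
  by_cases h : ν (π ⁻¹' {i}) = ∞
  · rw [cellIndicator, dif_pos h, measureReal_def, h, ENNReal.toReal_top,
      integral_congr_ae (Lp.coeFn_zero ℝ 1 ν)]
    simp
  · rw [cellIndicator_of_ne_top h, integral_indicatorConstLp, smul_eq_mul, mul_one]

theorem cellIndicator_eq_zero {i : ι} (h : ν.real (π ⁻¹' {i}) = 0) : cellIndicator ν π i = 0 := by
  by_cases hi : ν (π ⁻¹' {i}) = ∞
  · rw [cellIndicator, dif_pos hi]
  · rw [cellIndicator_of_ne_top hi, ← norm_eq_zero,
      norm_indicatorConstLp one_ne_zero ENNReal.one_ne_top, h]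
    simp

theorem eq_sum_smul_cellIndicator {f : Lp ℝ 1 ν} {φ : ι → ℝ} (hf : f =ᵐ[ν] φ ∘ π)
    (hφ : ∀ i, ν (π ⁻¹' {i}) = ∞ → φ i = 0) :
    f = ∑ i ∈ π.range, φ i • cellIndicator ν π i := by
  have hterm : ∀ i, ⇑(φ i • cellIndicator ν π i) =ᵐ[ν]
      fun y => φ i * (π ⁻¹' {i}).indicator (fun _ => 1) y := by
    intro i
    by_cases hi : ν (π ⁻¹' {i}) = ∞
    · filter_upwards [Lp.coeFn_zero ℝ 1 ν] with y hy
      simpa [hφ i hi] using hy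
    · filter_upwards [Lp.coeFn_smul (φ i) (cellIndicator ν π i),
        cellIndicator_of_ne_top hi ▸ indicatorConstLp_coeFn] with y hsmul hind
      simp [hsmul, hind]
  apply Lp.ext
  filter_upwards [hf, Lp.coeFn_fun_finsetSum π.range fun i => φ i • cellIndicator ν π i,
    (eventually_all_finset π.range).2 fun i _ => hterm i] with y hfy hsum hterms
  rw [hfy, hsum, Finset.sum_congr rfl hterms, Finset.sum_eq_single (π y)]
  · simp
  · intro i _ hi
    simp [Ne.symm hi]
  · exact fun h => absurd (π.mem_range_self y) h

variable (π) in
/-- On cells of measure `0` or `∞` the normalized indicator is no probability density, and `H`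
is used instead. -/
def cellProfile (S : Lp ℝ 1 ν →ₗ[ℝ] Lp ℝ 1 μ) (H : Lp ℝ 1 μ) (i : ι) : Lp ℝ 1 μ :=
  if ν.real (π ⁻¹' {i}) = 0 then H else (ν.real (π ⁻¹' {i}))⁻¹ • S (cellIndicator ν π i)

variable {S : Lp ℝ 1 ν →ₗ[ℝ] Lp ℝ 1 μ} {H : Lp ℝ 1 μ}

theorem cellProfile_nonneg (hS : IsStochastic S) (hH : 0 ≤ H) (i : ι) :
    0 ≤ cellProfile π S H i := by
  unfold cellProfile
  split_ifs
  · exact hH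
  · exact smul_nonneg (inv_nonneg.2 measureReal_nonneg) (hS.map_nonneg _ (cellIndicator_nonneg i))

theorem integral_cellProfile (hS : IsStochastic S) (hH : ∫ x, H x ∂μ = 1) (i : ι) :
    ∫ x, cellProfile π S H i x ∂μ = 1 := by
  unfold cellProfile
  split_ifs with h
  · exact hH
  · rw [integral_congr_ae (Lp.coeFn_smul _ _)]
    simp only [Pi.smul_apply]
    rw [integral_smul, hS.integral_map, integral_cellIndicator, smul_eq_mul, inv_mul_cancel₀ h]

theorem cellOperator_cellProfile_cellIndicator (i : ι) :
    cellOperator ν π (cellProfile π S H) (cellIndicator ν π i) = S (cellIndicator ν π i) := by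
  by_cases h : ν.real (π ⁻¹' {i}) = 0
  · rw [cellIndicator_eq_zero h, map_zero, map_zero]
  have hfin : ν (π ⁻¹' {i}) ≠ ∞ := fun h' => h (by simp [measureReal_def, h'])
  have hcell : ∀ k,
      ∫ y in π ⁻¹' {k}, cellIndicator ν π i y ∂ν = ν.real (π ⁻¹' {i} ∩ π ⁻¹' {k}) := by
    intro k
    rw [cellIndicator_of_ne_top hfin, setIntegral_indicatorConstLp (π.measurableSet_fiber k),
      smul_eq_mul, mul_one]
  rw [cellOperator_apply, Finset.sum_eq_single i]
  · rw [hcell, inter_self, cellProfile, if_neg h, smul_smul, mul_inv_cancel₀ h, one_smul]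
  · intro k _ hki
    rw [hcell, ((Set.disjoint_singleton.2 hki.symm).preimage π).inter_eq, measureReal_empty,
      zero_smul]
  · intro hi
    refine absurd (π.mem_range_of_measure_ne_zero (μ := ν) fun h0 => h ?_) hi
    simp [measureReal_def, h0]

theorem cellOperator_cellProfile_eq_of_ae_eq_comp {f : Lp ℝ 1 ν} {φ : ι → ℝ}
    (hf : f =ᵐ[ν] φ ∘ π) (hφ : ∀ i, ν (π ⁻¹' {i}) = ∞ → φ i = 0) :
    cellOperator ν π (cellProfile π S H) f = S f := by
  rw [eq_sum_smul_cellIndicator hf hφ, map_sum, map_sum]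
  simp only [map_smul, cellOperator_cellProfile_cellIndicator]

end Cells

theorem exists_isStochasticIntegralOperator_norm_sub_le [SigmaFinite ν]
    {S : Lp ℝ 1 ν →ₗ[ℝ] Lp ℝ 1 μ} (hS : IsStochastic S) (s : Finset (Lp ℝ 1 ν)) {ε : ℝ}
    (hε : 0 < ε) : ∃ T, IsStochasticIntegralOperator T ∧ ∀ v ∈ s, ‖T v - S v‖ ≤ ε := by
  obtain rfl | hν := eq_or_ne ν 0
  · refine ⟨S, ⟨fun _ _ => 0, measurable_const, fun _ _ => le_rfl, by simp, fun f => ?_⟩,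
      fun v _ => by simpa using hε.le⟩
    rw [show f = 0 from Lp.ext (by simp [EventuallyEq]), map_zero]
    filter_upwards [Lp.coeFn_zero ℝ 1 μ] with x hx
    simpa using hx
  obtain ⟨u, hu0, hu1⟩ := exists_L1_nonneg_integral_eq_one hν
  choose σ hσ using fun v : s => Metric.denseRange_iff.1
    (Lp.simpleFunc.denseRange (E := ℝ) (μ := ν) ENNReal.one_ne_top) v.1 (ε / 2) (half_pos hε)
  set τ : s → SimpleFunc Y ℝ := fun v => Lp.simpleFunc.toSimpleFunc (σ v)
  set π := SimpleFunc.pi τ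
  have hG0 : ∀ w, 0 ≤ cellProfile π S (S u) w := cellProfile_nonneg hS (hS.map_nonneg u hu0)
  have hG1 : ∀ w, ∫ x, cellProfile π S (S u) w x ∂μ = 1 :=
    integral_cellProfile hS ((hS.integral_map u).trans hu1)
  refine ⟨cellOperator ν π (cellProfile π S (S u)),
    isStochasticIntegralOperator_cellOperator hG0 hG1, fun v hv => ?_⟩
  have hagree : cellOperator ν π (cellProfile π S (S u)) (σ ⟨v, hv⟩) = S (σ ⟨v, hv⟩) := by
    refine cellOperator_cellProfile_eq_of_ae_eq_comp (φ := fun w => w ⟨v, hv⟩)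
      (Lp.simpleFunc.toSimpleFunc_eq_toFun _).symm fun w hw => ?_
    by_contra hw0
    refine (lt_of_le_of_lt (measure_mono fun y (hy : π y = w) => ?_)
      ((τ ⟨v, hv⟩).measure_preimage_lt_top_of_integrable ?_ hw0)).ne hw
    · exact congrFun hy ⟨v, hv⟩
    · exact (L1.integrable_coeFn _).congr (Lp.simpleFunc.toSimpleFunc_eq_toFun _).symm
  calc ‖_ - S v‖ ≤ 2 * ‖v - σ ⟨v, hv⟩‖ :=
        (isStochastic_cellOperator hG0 hG1).norm_sub_map_le hS hagree v
    _ ≤ ε := by linarith [dist_eq_norm v (σ ⟨v, hv⟩ : Lp ℝ 1 ν) ▸ hσ ⟨v, hv⟩]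

end MeasureTheory

end

theorem stochastic_operator_approx_by_integral_operators_general
    {X Y : Type*} [MeasurableSpace X] [MeasurableSpace Y]
    (μ : Measure X) (ν : Measure Y) [SigmaFinite ν]
    (S : Lp ℝ 1 ν →ₗ[ℝ] Lp ℝ 1 μ)
    (hSpos : ∀ u : Lp ℝ 1 ν, 0 ≤ u → 0 ≤ S u)
    (hSint : ∀ u : Lp ℝ 1 ν, ∫ x, S u x ∂μ = ∫ y, u y ∂ν)
    (V : Submodule ℝ (Lp ℝ 1 ν)) [FiniteDimensional ℝ V] :
    ∃ Sk : ℕ → (Lp ℝ 1 ν →ₗ[ℝ] Lp ℝ 1 μ),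
      (∀ m, ∃ K : X → Y → ℝ,
        Measurable (Function.uncurry K) ∧
        (∀ x y, 0 ≤ K x y) ∧
        (∀ᵐ y ∂ν, ∫ x, K x y ∂μ = 1) ∧
        (∀ f : Lp ℝ 1 ν, (Sk m f : X → ℝ) =ᵐ[μ] fun x => ∫ y, K x y * f y ∂ν)) ∧
      (∀ f ∈ V, Filter.Tendsto (fun m => ‖Sk m f - S f‖) Filter.atTop (nhds 0)) := by
  obtain ⟨s, rfl⟩ := (Submodule.fg_iff_finiteDimensional V).2 ‹_›
  choose T hT hTs using fun m : ℕ =>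
    exists_isStochasticIntegralOperator_norm_sub_le ⟨hSpos, hSint⟩ s
      (Nat.one_div_pos_of_nat (n := m))
  refine ⟨T, hT, fun f hf => tendsto_iff_norm_sub_tendsto_zero.1 ?_⟩
  refine tendsto_apply_of_mem_span (fun v hv => ?_) hf
  exact tendsto_iff_norm_sub_tendsto_zero.2 <| squeeze_zero (fun _ => norm_nonneg _)
    (fun m => hTs m v hv) tendsto_one_div_add_atTop_nhds_zero_nat

theorem stochastic_operator_approx_by_integral_operators
    {X Y : Type*} [MeasurableSpace X] [MeasurableSpace Y]
    (μ : Measure X) (ν : Measure Y) [SigmaFinite μ] [SigmaFinite ν]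
    (S : Lp ℝ 1 ν →ₗ[ℝ] Lp ℝ 1 μ)
    (hSpos : ∀ u : Lp ℝ 1 ν, 0 ≤ u → 0 ≤ S u)
    (hSint : ∀ u : Lp ℝ 1 ν, ∫ x, S u x ∂μ = ∫ y, u y ∂ν)
    (V : Submodule ℝ (Lp ℝ 1 ν)) [FiniteDimensional ℝ V] :
    ∃ Sk : ℕ → (Lp ℝ 1 ν →ₗ[ℝ] Lp ℝ 1 μ),
      (∀ m, ∃ K : X → Y → ℝ,
        Measurable (Function.uncurry K) ∧
        (∀ x y, 0 ≤ K x y) ∧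
        (∀ᵐ y ∂ν, ∫ x, K x y ∂μ = 1) ∧
        (∀ f : Lp ℝ 1 ν, (Sk m f : X → ℝ) =ᵐ[μ] fun x => ∫ y, K x y * f y ∂ν)) ∧
      (∀ f ∈ V, Filter.Tendsto (fun m => ‖Sk m f - S f‖) Filter.atTop (nhds 0)) :=
  stochastic_operator_approx_by_integral_operators_general μ ν S hSpos hSint V
end

section
/- Let (X,μ) and (Y,ν) be σ-finite measure spaces, f ∈ L¹(X,ℝⁿ), g ∈ L¹(Y,ℝⁿ). If f is matrix majorized by g (there exists a stochastic operator S : L¹(Y)→L¹(X) with S g_i = f_i componentwise), then ∫_X φ(f(x)) dμ(x) ≤ ∫_Y φ(g(y)) dν(y) for every nonnegative sublinear functional φ : ℝⁿ → [0,∞). -/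
/-!
A sublinear `φ` on `ℝⁿ` is convex, hence continuous and Lipschitz, and by Hahn–Banach it has a
supporting linear functional `ℓ ≤ φ` at every point; those at a countable dense set of points
already have `φ` as their supremum. Put `H = φ ∘ g ∈ L¹(ν)`. For each such `ℓ` we have
`ℓ ∘ g ≤ H`, and `ℓ ∘ g` is a linear combination of the `gᵢ`, so positivity and linearity of `S`
give `ℓ ∘ f = S (ℓ ∘ g) ≤ S H` a.e. Countably many null sets are discarded, so `φ ∘ f ≤ S H` a.e.,
and `∫ φ ∘ f ≤ ∫ S H = ∫ H = ∫ φ ∘ g`.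
-/

open MeasureTheory Set

structure IsSublinear {E : Type*} [AddCommGroup E] [Module ℝ E] (φ : E → ℝ) : Prop where
  map_smul_of_nonneg : ∀ l : ℝ, 0 ≤ l → ∀ v, φ (l • v) = l * φ v
  map_add_le : ∀ v w, φ (v + w) ≤ φ v + φ w

namespace IsSublinear

variable {E : Type*} {φ : E → ℝ}

section Module

variable [AddCommGroup E] [Module ℝ E]

lemma map_zero (hφ : IsSublinear φ) : φ 0 = 0 := by
  simpa using hφ.map_smul_of_nonneg 0 le_rfl 0

lemma le_add_map_sub (hφ : IsSublinear φ) (v w : E) : φ v ≤ φ w + φ (v - w) := by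
  simpa using hφ.map_add_le w (v - w)

lemma neg_le_map_neg (hφ : IsSublinear φ) (v : E) : -φ v ≤ φ (-v) := by
  have := hφ.map_add_le v (-v)
  rw [add_neg_cancel, hφ.map_zero] at this
  linarith

lemma mul_le_map_smul (hφ : IsSublinear φ) (c : ℝ) (v : E) : c * φ v ≤ φ (c • v) := by
  rcases le_or_gt 0 c with hc | hc
  · rw [hφ.map_smul_of_nonneg c hc]
  · rw [← neg_smul_neg, hφ.map_smul_of_nonneg (-c) (by linarith)]
    nlinarith [hφ.neg_le_map_neg v]

lemma convexOn (hφ : IsSublinear φ) : ConvexOn ℝ univ φ :=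
  ⟨convex_univ, fun x _ y _ a b ha hb _ => by
    simpa only [hφ.map_smul_of_nonneg a ha, hφ.map_smul_of_nonneg b hb, smul_eq_mul] using
      hφ.map_add_le (a • x) (b • y)⟩

lemma exists_linearMap_le_eq (hφ : IsSublinear φ) (s : E) :
    ∃ ℓ : E →ₗ[ℝ] ℝ, (∀ v, ℓ v ≤ φ v) ∧ ℓ s = φ s := by
  have H : ∀ c : ℝ, c • s = 0 → c • φ s = 0 := by
    intro c hc
    rcases smul_eq_zero.1 hc with rfl | rfl
    · simp
    · simp [hφ.map_zero]
  set p := LinearPMap.mkSpanSingleton' (σ := RingHom.id ℝ) s (φ s) H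
  have hle : ∀ x : p.domain, p x ≤ φ x := by
    rintro ⟨x, hx⟩
    obtain ⟨c, rfl⟩ := Submodule.mem_span_singleton.1 hx
    exact (LinearPMap.mkSpanSingleton'_apply _ _ _ c hx).trans_le (hφ.mul_le_map_smul c s)
  obtain ⟨ℓ, hℓs, hℓφ⟩ := exists_extension_of_le_sublinear p φ
    (fun c hc => hφ.map_smul_of_nonneg c hc.le) hφ.map_add_le hle
  exact ⟨ℓ, hℓφ, (hℓs ⟨s, Submodule.mem_span_singleton_self s⟩).trans
    (LinearPMap.mkSpanSingleton'_apply_self _ _ _ _)⟩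

end Module

section Normed

variable [NormedAddCommGroup E] [NormedSpace ℝ E]

lemma continuous [FiniteDimensional ℝ E] (hφ : IsSublinear φ) : Continuous φ :=
  continuousOn_univ.1 (hφ.convexOn.continuousOn isOpen_univ)

lemma exists_le_mul_norm [FiniteDimensional ℝ E] (hφ : IsSublinear φ) :
    ∃ C, ∀ v, φ v ≤ C * ‖v‖ := by
  obtain ⟨C, hC⟩ := (isCompact_sphere (0 : E) 1).exists_bound_of_continuousOn
    hφ.continuous.continuousOn
  refine ⟨C, fun v => ?_⟩
  rcases eq_or_ne v 0 with rfl | hv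
  · simp [hφ.map_zero]
  have hu : ‖v‖⁻¹ • v ∈ Metric.sphere (0 : E) 1 := by simp [norm_smul, hv]
  calc φ v = ‖v‖ * φ (‖v‖⁻¹ • v) := by
        rw [← hφ.map_smul_of_nonneg _ (norm_nonneg v), smul_inv_smul₀ (norm_ne_zero_iff.2 hv)]
    _ ≤ ‖v‖ * C := mul_le_mul_of_nonneg_left ((le_abs_self _).trans (hC _ hu)) (norm_nonneg v)
    _ = C * ‖v‖ := mul_comm _ _

lemma exists_lipschitzWith [FiniteDimensional ℝ E] (hφ : IsSublinear φ) :
    ∃ K, LipschitzWith K φ := by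
  obtain ⟨C, hC⟩ := hφ.exists_le_mul_norm
  refine ⟨_, LipschitzWith.of_le_add_mul' C fun v w => ?_⟩
  rw [dist_eq_norm]
  exact (hφ.le_add_map_sub v w).trans (add_le_add_right (hC _) _)

lemma integrable_comp [FiniteDimensional ℝ E] (hφ : IsSublinear φ) {α : Type*}
    [MeasurableSpace α] {μ : Measure α} {F : α → E} (hF : Integrable F μ) :
    Integrable (fun x => φ (F x)) μ := by
  obtain ⟨K, hK⟩ := hφ.exists_lipschitzWith
  exact memLp_one_iff_integrable.1 (hK.comp_memLp hφ.map_zero (memLp_one_iff_integrable.2 hF))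

lemma exists_countable_linearMap_le [TopologicalSpace.SeparableSpace E] (hφ : IsSublinear φ)
    (hcont : Continuous φ) :
    ∃ D : Set (E →ₗ[ℝ] ℝ), D.Countable ∧ (∀ ℓ ∈ D, ∀ v, ℓ v ≤ φ v) ∧
      ∀ v t, (∀ ℓ ∈ D, ℓ v ≤ t) → φ v ≤ t := by
  obtain ⟨T, hTc, hTd⟩ := TopologicalSpace.exists_countable_dense E
  choose ℓ hℓφ hℓs using hφ.exists_linearMap_le_eq
  refine ⟨ℓ '' T, hTc.image ℓ, forall_mem_image.2 fun s _ => hℓφ s, fun v t hv => ?_⟩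
  -- at `s ∈ T`, `φ s = ℓ s v + ℓ s (s - v) ≤ t + φ (s - v)`; now let `s → v`
  have hT : T ⊆ {s | φ s - φ (s - v) ≤ t} := fun s hs => by
    have := hℓφ s (s - v)
    rw [map_sub, hℓs] at this
    show φ s - φ (s - v) ≤ t
    linarith [hv (ℓ s) (mem_image_of_mem ℓ hs)]
  have hclosed : IsClosed {s | φ s - φ (s - v) ≤ t} :=
    isClosed_le (hcont.sub (hcont.comp (continuous_id.sub continuous_const))) continuous_const
  have hvT : φ v - φ (v - v) ≤ t := hclosed.closure_subset_iff.2 hT (hTd.closure_eq ▸ mem_univ v)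
  rwa [sub_self, hφ.map_zero, sub_zero] at hvT

end Normed

end IsSublinear

section Lp

variable {α β ι : Type*} [MeasurableSpace α] [MeasurableSpace β] {μ : Measure α} {ν : Measure β}
  [Fintype ι] [DecidableEq ι] {p q : ENNReal}

lemma Lp.coeFn_sum_map_single_smul (ℓ : (ι → ℝ) →ₗ[ℝ] ℝ) (u : ι → Lp ℝ p μ) :
    ⇑(∑ i, ℓ (Pi.single i 1) • u i) =ᵐ[μ] fun x => ℓ (fun i => u i x) := by
  filter_upwards [Lp.coeFn_fun_finsetSum Finset.univ fun i => ℓ (Pi.single i 1) • u i,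
    ae_all_iff.2 fun i : ι => Lp.coeFn_smul (ℓ (Pi.single i 1)) (u i)] with x hsum hsmul
  rw [hsum]
  conv_rhs => rw [pi_eq_sum_univ' fun i => u i x, map_sum]
  simp [hsmul, mul_comm]

lemma ae_linearMap_le_of_positive {S : Lp ℝ p ν →ₗ[ℝ] Lp ℝ q μ}
    (hpos : ∀ u, 0 ≤ u → 0 ≤ S u) {f : ι → Lp ℝ q μ} {g : ι → Lp ℝ p ν}
    (hSg : ∀ i, S (g i) = f i) (ℓ : (ι → ℝ) →ₗ[ℝ] ℝ) {h : Lp ℝ p ν}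
    (hle : ∀ᵐ y ∂ν, ℓ (fun i => g i y) ≤ h y) :
    ∀ᵐ x ∂μ, ℓ (fun i => f i x) ≤ S h x := by
  have hgh : ∑ i, ℓ (Pi.single i 1) • g i ≤ h := by
    rw [← Lp.coeFn_le]
    filter_upwards [Lp.coeFn_sum_map_single_smul ℓ g, hle] with y hy hy'
    rwa [hy]
  have hSgh : S (∑ i, ℓ (Pi.single i 1) • g i) ≤ S h := by
    simpa using hpos _ (sub_nonneg.2 hgh)
  simp only [map_sum, map_smul, hSg] at hSgh
  filter_upwards [Lp.coeFn_sum_map_single_smul ℓ f, (Lp.coeFn_le _ _).2 hSgh] with x hx hx'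
  rwa [← hx]

end Lp

theorem matrix_majorization_sublinear_inequality_general
    {n : ℕ} {X Y : Type*} [MeasurableSpace X] [MeasurableSpace Y]
    (μ : Measure X) (ν : Measure Y)
    (f : Fin n → Lp ℝ 1 μ) (g : Fin n → Lp ℝ 1 ν)
    (hmaj : ∃ S : Lp ℝ 1 ν →ₗ[ℝ] Lp ℝ 1 μ,
      (∀ u : Lp ℝ 1 ν, 0 ≤ u → 0 ≤ S u) ∧
      (∀ u : Lp ℝ 1 ν, ∫ x, S u x ∂μ = ∫ y, u y ∂ν) ∧
      (∀ i, S (g i) = f i))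
    (φ : (Fin n → ℝ) → ℝ)
    (hhom : ∀ l : ℝ, 0 ≤ l → ∀ v, φ (l • v) = l * φ v)
    (hsub : ∀ v w, φ (v + w) ≤ φ v + φ w) :
    ∫ x, φ (fun i => f i x) ∂μ ≤ ∫ y, φ (fun i => g i y) ∂ν := by
  obtain ⟨S, hpos, hint, hSg⟩ := hmaj
  have hφ : IsSublinear φ := ⟨hhom, hsub⟩
  have hφf : Integrable (fun x => φ (fun i => f i x)) μ :=
    hφ.integrable_comp (Integrable.of_eval fun i => L1.integrable_coeFn (f i))
  have hφg : Integrable (fun y => φ (fun i => g i y)) ν :=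
    hφ.integrable_comp (Integrable.of_eval fun i => L1.integrable_coeFn (g i))
  set H : Lp ℝ 1 ν := hφg.toL1 _
  obtain ⟨D, hDc, hDφ, hφD⟩ := hφ.exists_countable_linearMap_le hφ.continuous
  have hfH : ∀ᵐ x ∂μ, φ (fun i => f i x) ≤ S H x := by
    filter_upwards [(ae_ball_iff hDc).2 fun ℓ hℓ => ae_linearMap_le_of_positive hpos hSg ℓ
      (hφg.coeFn_toL1.mono fun y hy => by rw [hy]; exact hDφ ℓ hℓ _)] with x hx
    exact hφD _ _ hx
  calc ∫ x, φ (fun i => f i x) ∂μ ≤ ∫ x, S H x ∂μ :=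
        integral_mono_ae hφf (L1.integrable_coeFn _) hfH
    _ = ∫ y, H y ∂ν := hint H
    _ = ∫ y, φ (fun i => g i y) ∂ν := integral_congr_ae hφg.coeFn_toL1

theorem matrix_majorization_sublinear_inequality
    {n : ℕ} {X Y : Type*} [MeasurableSpace X] [MeasurableSpace Y]
    (μ : Measure X) (ν : Measure Y) [SigmaFinite μ] [SigmaFinite ν]
    (f : Fin n → Lp ℝ 1 μ) (g : Fin n → Lp ℝ 1 ν)
    (hmaj : ∃ S : Lp ℝ 1 ν →ₗ[ℝ] Lp ℝ 1 μ,
      (∀ u : Lp ℝ 1 ν, 0 ≤ u → 0 ≤ S u) ∧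
      (∀ u : Lp ℝ 1 ν, ∫ x, S u x ∂μ = ∫ y, u y ∂ν) ∧
      (∀ i, S (g i) = f i))
    (φ : (Fin n → ℝ) → ℝ)
    (hnonneg : ∀ v, 0 ≤ φ v)
    (hhom : ∀ l : ℝ, 0 ≤ l → ∀ v, φ (l • v) = l * φ v)
    (hsub : ∀ v w, φ (v + w) ≤ φ v + φ w) :
    ∫ x, φ (fun i => f i x) ∂μ ≤ ∫ y, φ (fun i => g i y) ∂ν :=
  matrix_majorization_sublinear_inequality_general μ ν f g hmaj φ hhom hsub
end
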